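/- There exists a constant C > 0 such that for all integers j ≥ 1, all l ∈ ℤ and all k ∈ ℤ the Lebesgue measure of the set { x ∈ [-1,1] : ∫_{-1}^{1} | Δ²_{h·2^{-j}} (ψ_{j+l,k} ∘ ρ₁)(x) | dh ≠ 0 } is at most C · 2^{-j}; that is, the second-order mean of differences at scale 2^{-j} of the reflected-periodized Chui–Wang wavelet at level j+l is supported, within one period, on a set of measure O(2^{-j}). -/
import Mathlib


open MeasureTheory

/-- The second order cardinal B-spline `N₂`. -/
noncomputable def N2 (x : ℝ) : ℝ :=
  if 0 ≤ x ∧ x < 1 then x else if 1 ≤ x ∧ x < 2 then 2 - x else 0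

/-- The second order Chui–Wang mother wavelet `ψ`. -/
noncomputable def cwPsi (x : ℝ) : ℝ :=
  if 0 ≤ x ∧ x < 1 / 2 then x / 6
  else if 1 / 2 ≤ x ∧ x < 1 then -7 * x / 6 + 2 / 3
  else if 1 ≤ x ∧ x < 3 / 2 then 8 * x / 3 - 19 / 6
  else if 3 / 2 ≤ x ∧ x < 2 then -8 * x / 3 + 29 / 6
  else if 2 ≤ x ∧ x < 5 / 2 then 7 * x / 6 - 17 / 6
  else if 5 / 2 ≤ x ∧ x < 3 then -x / 6 + 1 / 2
  else 0

/-- The Chui–Wang wavelet system: `ψ_{j,k}(x) = ψ(2^j x - k)` for `j ≥ 0`,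
`ψ_{-1,k}(x) = N₂(x - k)`, and `ψ_{j,k} = 0` for `j < -1`. -/
noncomputable def cw (j k : ℤ) (x : ℝ) : ℝ :=
  if 0 ≤ j then cwPsi ((2 : ℝ) ^ j * x - (k : ℝ))
  else if j = -1 then N2 (x - (k : ℝ))
  else 0

/-- The 2-periodic reflection `ρ₁(x) = min(x mod 2, (-x) mod 2)`. -/
noncomputable def rho1 (x : ℝ) : ℝ :=
  min (2 * Int.fract (x / 2)) (2 * Int.fract (-x / 2))

/-- Second-order forward difference `Δ²_s g(x) = g(x+2s) - 2g(x+s) + g(x)`. -/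
def diff2 (s : ℝ) (g : ℝ → ℝ) (x : ℝ) : ℝ :=
  g (x + 2 * s) - 2 * g (x + s) + g x



/-! ### Auxiliary lemmas -/

lemma cwPsi_piece0 {t : ℝ} (h : t < 0) : cwPsi t = 0 := by
  unfold cwPsi
  rw [if_neg (by rintro ⟨h1, -⟩; linarith), if_neg (by rintro ⟨h1, -⟩; linarith),
    if_neg (by rintro ⟨h1, -⟩; linarith), if_neg (by rintro ⟨h1, -⟩; linarith),
    if_neg (by rintro ⟨h1, -⟩; linarith), if_neg (by rintro ⟨h1, -⟩; linarith)]

lemma cwPsi_piece1 {t : ℝ} (h1 : 0 ≤ t) (h2 : t < 1/2) : cwPsi t = t / 6 := by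
  unfold cwPsi
  rw [if_pos ⟨h1, h2⟩]

lemma cwPsi_piece2 {t : ℝ} (h1 : 1/2 ≤ t) (h2 : t < 1) : cwPsi t = -7 * t / 6 + 2 / 3 := by
  unfold cwPsi
  rw [if_neg (by rintro ⟨-, h⟩; linarith), if_pos ⟨h1, h2⟩]

lemma cwPsi_piece3 {t : ℝ} (h1 : 1 ≤ t) (h2 : t < 3/2) : cwPsi t = 8 * t / 3 - 19 / 6 := by
  unfold cwPsi
  rw [if_neg (by rintro ⟨-, h⟩; linarith), if_neg (by rintro ⟨-, h⟩; linarith), if_pos ⟨h1, h2⟩]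

lemma cwPsi_piece4 {t : ℝ} (h1 : 3/2 ≤ t) (h2 : t < 2) : cwPsi t = -8 * t / 3 + 29 / 6 := by
  unfold cwPsi
  rw [if_neg (by rintro ⟨-, h⟩; linarith), if_neg (by rintro ⟨-, h⟩; linarith),
    if_neg (by rintro ⟨-, h⟩; linarith), if_pos ⟨h1, h2⟩]

lemma cwPsi_piece5 {t : ℝ} (h1 : 2 ≤ t) (h2 : t < 5/2) : cwPsi t = 7 * t / 6 - 17 / 6 := by
  unfold cwPsi
  rw [if_neg (by rintro ⟨-, h⟩; linarith), if_neg (by rintro ⟨-, h⟩; linarith),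
    if_neg (by rintro ⟨-, h⟩; linarith), if_neg (by rintro ⟨-, h⟩; linarith), if_pos ⟨h1, h2⟩]

lemma cwPsi_piece6 {t : ℝ} (h1 : 5/2 ≤ t) (h2 : t < 3) : cwPsi t = -t / 6 + 1 / 2 := by
  unfold cwPsi
  rw [if_neg (by rintro ⟨-, h⟩; linarith), if_neg (by rintro ⟨-, h⟩; linarith),
    if_neg (by rintro ⟨-, h⟩; linarith), if_neg (by rintro ⟨-, h⟩; linarith),
    if_neg (by rintro ⟨-, h⟩; linarith), if_pos ⟨h1, h2⟩]

lemma cwPsi_piece7 {t : ℝ} (h : 3 ≤ t) : cwPsi t = 0 := by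
  unfold cwPsi
  rw [if_neg (by rintro ⟨-, h'⟩; linarith), if_neg (by rintro ⟨-, h'⟩; linarith),
    if_neg (by rintro ⟨-, h'⟩; linarith), if_neg (by rintro ⟨-, h'⟩; linarith),
    if_neg (by rintro ⟨-, h'⟩; linarith), if_neg (by rintro ⟨-, h'⟩; linarith)]

lemma N2_piece0 {t : ℝ} (h : t < 0) : N2 t = 0 := by
  unfold N2
  rw [if_neg (by rintro ⟨h1, -⟩; linarith), if_neg (by rintro ⟨h1, -⟩; linarith)]

lemma N2_piece1 {t : ℝ} (h1 : 0 ≤ t) (h2 : t < 1) : N2 t = t := by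
  unfold N2
  rw [if_pos ⟨h1, h2⟩]

lemma N2_piece2 {t : ℝ} (h1 : 1 ≤ t) (h2 : t < 2) : N2 t = 2 - t := by
  unfold N2
  rw [if_neg (by rintro ⟨-, h⟩; linarith), if_pos ⟨h1, h2⟩]

lemma N2_piece3 {t : ℝ} (h : 2 ≤ t) : N2 t = 0 := by
  unfold N2
  rw [if_neg (by rintro ⟨-, h'⟩; linarith), if_neg (by rintro ⟨-, h'⟩; linarith)]

lemma notMem_Icc' {u v p : ℝ} (hp : p ∉ Set.Icc u v) : v < p ∨ p < u := by
  by_contra hc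
  push_neg at hc
  exact hp ⟨hc.2, hc.1⟩

lemma cwPsi_affine {u v : ℝ}
    (h0 : (0:ℝ) ∉ Set.Icc u v) (h1 : (1/2:ℝ) ∉ Set.Icc u v) (h2 : (1:ℝ) ∉ Set.Icc u v)
    (h3 : (3/2:ℝ) ∉ Set.Icc u v) (h4 : (2:ℝ) ∉ Set.Icc u v) (h5 : (5/2:ℝ) ∉ Set.Icc u v)
    (h6 : (3:ℝ) ∉ Set.Icc u v) :
    ∃ c d : ℝ, ∀ t ∈ Set.Icc u v, cwPsi t = c * t + d := by
  rcases notMem_Icc' h0 with c0 | c0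
  · exact ⟨0, 0, fun t ht => by rw [cwPsi_piece0 (by linarith [ht.2] : t < 0)]; ring⟩
  rcases notMem_Icc' h1 with c1 | c1
  · exact ⟨1/6, 0, fun t ht => by
      rw [cwPsi_piece1 (by linarith [ht.1]) (by linarith [ht.2])]; ring⟩
  rcases notMem_Icc' h2 with c2 | c2
  · exact ⟨-7/6, 2/3, fun t ht => by
      rw [cwPsi_piece2 (by linarith [ht.1]) (by linarith [ht.2])]; ring⟩
  rcases notMem_Icc' h3 with c3 | c3
  · exact ⟨8/3, -19/6, fun t ht => by
      rw [cwPsi_piece3 (by linarith [ht.1]) (by linarith [ht.2])]; ring⟩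
  rcases notMem_Icc' h4 with c4 | c4
  · exact ⟨-8/3, 29/6, fun t ht => by
      rw [cwPsi_piece4 (by linarith [ht.1]) (by linarith [ht.2])]; ring⟩
  rcases notMem_Icc' h5 with c5 | c5
  · exact ⟨7/6, -17/6, fun t ht => by
      rw [cwPsi_piece5 (by linarith [ht.1]) (by linarith [ht.2])]; ring⟩
  rcases notMem_Icc' h6 with c6 | c6
  · exact ⟨-1/6, 1/2, fun t ht => by
      rw [cwPsi_piece6 (by linarith [ht.1]) (by linarith [ht.2])]; ring⟩
  · exact ⟨0, 0, fun t ht => by rw [cwPsi_piece7 (by linarith [ht.1])]; ring⟩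

lemma N2_affine {u v : ℝ}
    (h0 : (0:ℝ) ∉ Set.Icc u v) (h1 : (1:ℝ) ∉ Set.Icc u v) (h2 : (2:ℝ) ∉ Set.Icc u v) :
    ∃ c d : ℝ, ∀ t ∈ Set.Icc u v, N2 t = c * t + d := by
  rcases notMem_Icc' h0 with c0 | c0
  · exact ⟨0, 0, fun t ht => by rw [N2_piece0 (by linarith [ht.2] : t < 0)]; ring⟩
  rcases notMem_Icc' h1 with c1 | c1
  · exact ⟨1, 0, fun t ht => by
      rw [N2_piece1 (by linarith [ht.1]) (by linarith [ht.2])]; ring⟩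
  rcases notMem_Icc' h2 with c2 | c2
  · exact ⟨-1, 2, fun t ht => by
      rw [N2_piece2 (by linarith [ht.1]) (by linarith [ht.2])]; ring⟩
  · exact ⟨0, 0, fun t ht => by rw [N2_piece3 (by linarith [ht.1])]; ring⟩

lemma rho1_posside {t : ℝ} (h1 : 0 < t) (h2 : t < 1) : rho1 t = t := by
  have e1 : Int.fract (t / 2) = t / 2 :=
    Int.fract_eq_self.mpr ⟨by linarith, by linarith⟩
  have e2 : Int.fract (-t / 2) = 1 - t / 2 := by
    have e : Int.fract (-t / 2) = Int.fract (-t / 2 + 1) := by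
      rw [Int.fract_eq_fract]
      exact ⟨-1, by push_cast; ring⟩
    rw [e, Int.fract_eq_self.mpr ⟨by linarith, by linarith⟩]
    ring
  rw [rho1, e1, e2, show 2 * (t / 2) = t by ring, show 2 * (1 - t / 2) = 2 - t by ring,
    min_eq_left (by linarith)]

lemma rho1_negside {t : ℝ} (h1 : -1 < t) (h2 : t < 0) : rho1 t = -t := by
  have e1 : Int.fract (t / 2) = t / 2 + 1 := by
    have e : Int.fract (t / 2) = Int.fract (t / 2 + 1) := by
      rw [Int.fract_eq_fract]
      exact ⟨-1, by push_cast; ring⟩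
    rw [e, Int.fract_eq_self.mpr ⟨by linarith, by linarith⟩]
  have e2 : Int.fract (-t / 2) = -t / 2 :=
    Int.fract_eq_self.mpr ⟨by linarith, by linarith⟩
  rw [rho1, e1, e2, show 2 * (t / 2 + 1) = t + 2 by ring, show 2 * (-t / 2) = -t by ring,
    min_eq_right (by linarith)]

/-- Breakpoints of `cw m k`. -/
noncomputable def bpt (m k : ℤ) (i : ℕ) : ℝ :=
  if 0 ≤ m then ((i : ℝ) / 2 + (k : ℝ)) / (2 : ℝ) ^ m
  else (k : ℝ) + min (i : ℝ) 2

lemma cw_affine (m k : ℤ) {u v : ℝ}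
    (hb : ∀ i : ℕ, i < 7 → bpt m k i ∉ Set.Icc u v) :
    ∃ c d : ℝ, ∀ t ∈ Set.Icc u v, cw m k t = c * t + d := by
  rcases le_or_gt 0 m with hm | hm
  · have hA : (0:ℝ) < (2:ℝ) ^ m := zpow_pos (by norm_num) m
    have step : ∀ i : ℕ, i < 7 →
        ((i:ℝ)/2) ∉ Set.Icc ((2:ℝ)^m * u - (k:ℝ)) ((2:ℝ)^m * v - (k:ℝ)) := by
      intro i hi hmem
      rw [Set.mem_Icc] at hmem
      refine hb i hi ?_
      rw [Set.mem_Icc, bpt, if_pos hm]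
      constructor
      · rw [le_div_iff₀ hA]
        nlinarith [hmem.1]
      · rw [div_le_iff₀ hA]
        nlinarith [hmem.2]
    obtain ⟨c, d, hcd⟩ := cwPsi_affine (u := (2:ℝ)^m * u - (k:ℝ)) (v := (2:ℝ)^m * v - (k:ℝ))
      (by have := step 0 (by norm_num); norm_num [Set.mem_Icc] at this ⊢; exact this)
      (by have := step 1 (by norm_num); norm_num [Set.mem_Icc] at this ⊢; exact this)
      (by have := step 2 (by norm_num); norm_num [Set.mem_Icc] at this ⊢; exact this)
      (by have := step 3 (by norm_num); norm_num [Set.mem_Icc] at this ⊢; exact this)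
      (by have := step 4 (by norm_num); norm_num [Set.mem_Icc] at this ⊢; exact this)
      (by have := step 5 (by norm_num); norm_num [Set.mem_Icc] at this ⊢; exact this)
      (by have := step 6 (by norm_num); norm_num [Set.mem_Icc] at this ⊢; exact this)
    refine ⟨c * (2:ℝ)^m, d - c * k, fun t ht => ?_⟩
    have hmem : (2:ℝ)^m * t - k ∈ Set.Icc ((2:ℝ)^m * u - (k:ℝ)) ((2:ℝ)^m * v - (k:ℝ)) := by
      rw [Set.mem_Icc]
      constructor
      · linarith [mul_le_mul_of_nonneg_left ht.1 hA.le]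
      · linarith [mul_le_mul_of_nonneg_left ht.2 hA.le]
    unfold cw
    rw [if_pos hm, hcd _ hmem]
    ring
  · by_cases hm1 : m = -1
    · have e : ∀ i : ℕ, bpt m k i = (k:ℝ) + min (i:ℝ) 2 := fun i => by
        rw [bpt, if_neg (not_le.mpr hm)]
      obtain ⟨c, d, hcd⟩ := N2_affine (u := u - k) (v := v - k)
        (by intro hmem; rw [Set.mem_Icc] at hmem
            refine hb 0 (by norm_num) ?_
            rw [Set.mem_Icc, e]
            norm_num
            constructor <;> linarith [hmem.1, hmem.2])
        (by intro hmem; rw [Set.mem_Icc] at hmem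
            refine hb 1 (by norm_num) ?_
            rw [Set.mem_Icc, e]
            norm_num
            constructor <;> linarith [hmem.1, hmem.2])
        (by intro hmem; rw [Set.mem_Icc] at hmem
            refine hb 2 (by norm_num) ?_
            rw [Set.mem_Icc, e]
            norm_num
            constructor <;> linarith [hmem.1, hmem.2])
      refine ⟨c, d - c * k, fun t ht => ?_⟩
      unfold cw
      rw [if_neg (not_le.mpr hm), if_pos hm1,
        hcd (t - k) ⟨by linarith [ht.1], by linarith [ht.2]⟩]
      ring
    · refine ⟨0, 0, fun t ht => ?_⟩
      unfold cw
      rw [if_neg (not_le.mpr hm), if_neg hm1]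
      ring

/-- Knot points of `fun t => cw m k (rho1 t)` relevant for `[-1,1]`. -/
noncomputable def knot (m k : ℤ) : Fin 3 ⊕ Bool × Fin 7 → ℝ
  | .inl i => ((i : ℕ) : ℝ) - 1
  | .inr (b, i) => if b then bpt m k (i : ℕ) else -bpt m k (i : ℕ)

lemma key (m k : ℤ) {δ x : ℝ} (hδ0 : 0 < δ) (hδ4 : δ ≤ 1/4)
    (hx1 : -1 ≤ x) (hx2 : x ≤ 1)
    (hfar : ∀ ι : Fin 3 ⊕ Bool × Fin 7, x ∉ Set.Icc (knot m k ι - δ) (knot m k ι + δ)) :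
    ∃ c d : ℝ, ∀ t ∈ Set.Icc (x - δ) (x + δ), cw m k (rho1 t) = c * t + d := by
  have far : ∀ ι, x < knot m k ι - δ ∨ knot m k ι + δ < x := by
    intro ι
    rcases lt_or_ge x (knot m k ι - δ) with h | h
    · exact Or.inl h
    rcases lt_or_ge (knot m k ι + δ) x with h' | h'
    · exact Or.inr h'
    exact absurd ⟨h, h'⟩ (hfar ι)
  have em1 : knot m k (Sum.inl 0) = -1 := by norm_num [knot]
  have e0 : knot m k (Sum.inl 1) = 0 := by norm_num [knot]
  have ep1 : knot m k (Sum.inl 2) = 1 := by norm_num [knot]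
  have hm1 : -1 + δ < x := by
    rcases far (Sum.inl 0) with h | h <;> rw [em1] at h <;> linarith
  have hp1 : x < 1 - δ := by
    rcases far (Sum.inl 2) with h | h <;> rw [ep1] at h <;> linarith
  rcases far (Sum.inl 1) with h0 | h0 <;> rw [e0] at h0
  · -- x < 0 - δ : the interval lies in (-1, 0)
    have hb' : ∀ i : ℕ, i < 7 → bpt m k i ∉ Set.Icc (-(x + δ)) (-(x - δ)) := by
      intro i hi hmem
      rw [Set.mem_Icc] at hmem
      have e : knot m k (Sum.inr (false, (⟨i, hi⟩ : Fin 7))) = -bpt m k i := rfl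
      rcases far (Sum.inr (false, ⟨i, hi⟩)) with h | h <;> rw [e] at h <;>
        linarith [hmem.1, hmem.2]
    obtain ⟨c, d, hcd⟩ := cw_affine m k hb'
    refine ⟨-c, d, fun t ht => ?_⟩
    obtain ⟨ht1, ht2⟩ := ht
    rw [rho1_negside (by linarith : -1 < t) (by linarith : t < 0),
      hcd (-t) ⟨by linarith, by linarith⟩]
    ring
  · -- 0 + δ < x : the interval lies in (0, 1)
    have hb' : ∀ i : ℕ, i < 7 → bpt m k i ∉ Set.Icc (x - δ) (x + δ) := by
      intro i hi hmem
      rw [Set.mem_Icc] at hmem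
      have e : knot m k (Sum.inr (true, (⟨i, hi⟩ : Fin 7))) = bpt m k i := rfl
      rcases far (Sum.inr (true, ⟨i, hi⟩)) with h | h <;> rw [e] at h <;>
        linarith [hmem.1, hmem.2]
    obtain ⟨c, d, hcd⟩ := cw_affine m k hb'
    refine ⟨c, d, fun t ht => ?_⟩
    obtain ⟨ht1, ht2⟩ := ht
    rw [rho1_posside (by linarith : 0 < t) (by linarith : t < 1), hcd t ⟨ht1, ht2⟩]

/-- Within one period, the second-order mean of differences at scale `2^{-j}` of the
reflected-periodized Chui–Wang wavelet at level `j+l` is supported on a set of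
measure at most `C · 2^{-j}`. -/
theorem statement16 :
    ∃ C : ℝ, 0 < C ∧
      ∀ j : ℤ, 1 ≤ j → ∀ l k : ℤ,
        volume {x ∈ Set.Icc (-1 : ℝ) 1 |
            (∫ h in (-1 : ℝ)..1,
              |diff2 (h * (2 : ℝ) ^ (-j)) (fun t => cw (j + l) k (rho1 t)) x|) ≠ 0} ≤
          ENNReal.ofReal (C * (2 : ℝ) ^ (-j)) := by
  refine ⟨300, by norm_num, ?_⟩
  intro j hj l k
  have h2j : (0:ℝ) < (2:ℝ) ^ (-j) := zpow_pos (by norm_num) _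
  set m := j + l with hmdef
  by_cases hj3 : 3 ≤ j
  · -- main case
    set δ := 2 * (2:ℝ) ^ (-j) with hδdef
    have hδ0 : 0 < δ := by rw [hδdef]; positivity
    have hδ4 : δ ≤ 1/4 := by
      have h1 : (2:ℝ) ^ (-j) ≤ (2:ℝ) ^ (-3:ℤ) :=
        zpow_le_zpow_right₀ (by norm_num) (by omega)
      have h2 : (2:ℝ) ^ (-3:ℤ) = 1/8 := by norm_num
      rw [hδdef]; rw [h2] at h1; linarith
    have hsub : {x ∈ Set.Icc (-1 : ℝ) 1 |
        (∫ h in (-1 : ℝ)..1,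
          |diff2 (h * (2 : ℝ) ^ (-j)) (fun t => cw m k (rho1 t)) x|) ≠ 0} ⊆
        ⋃ ι : Fin 3 ⊕ Bool × Fin 7, Set.Icc (knot m k ι - δ) (knot m k ι + δ) := by
      intro x hx
      obtain ⟨hxI, hne⟩ := hx
      by_contra hnot
      simp only [Set.mem_iUnion, not_exists] at hnot
      obtain ⟨c, d, hcd⟩ := key m k hδ0 hδ4 hxI.1 hxI.2 hnot
      refine hne ?_
      have hzero : Set.EqOn
          (fun h => |diff2 (h * (2 : ℝ) ^ (-j)) (fun t => cw m k (rho1 t)) x|)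
          (fun _ => (0:ℝ)) (Set.uIcc (-1:ℝ) 1) := by
        intro h hh
        rw [Set.uIcc_of_le (by norm_num : (-1:ℝ) ≤ 1), Set.mem_Icc] at hh
        have habs : |h| ≤ 1 := abs_le.mpr ⟨hh.1, hh.2⟩
        have hs : |h * (2:ℝ) ^ (-j)| ≤ (2:ℝ) ^ (-j) := by
          rw [abs_mul, abs_of_pos h2j]
          nlinarith [abs_nonneg h]
        obtain ⟨hs1, hs2⟩ := abs_le.mp hs
        show |diff2 (h * (2:ℝ) ^ (-j)) (fun t => cw m k (rho1 t)) x| = 0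
        simp only [diff2]
        rw [hcd (x + 2 * (h * (2:ℝ) ^ (-j))) ⟨by linarith, by linarith⟩,
          hcd (x + h * (2:ℝ) ^ (-j)) ⟨by linarith, by linarith⟩,
          hcd x ⟨by linarith, by linarith⟩, abs_eq_zero]
        ring
      have hz : (∫ h in (-1:ℝ)..1,
          |diff2 (h * (2 : ℝ) ^ (-j)) (fun t => cw m k (rho1 t)) x|) =
          ∫ _ in (-1:ℝ)..1, (0:ℝ) := intervalIntegral.integral_congr hzero
      rw [hz, intervalIntegral.integral_zero]
    refine le_trans (measure_mono hsub) (le_trans (measure_iUnion_fintype_le _ _) ?_)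
    have hone : ∀ ι : Fin 3 ⊕ Bool × Fin 7,
        volume (Set.Icc (knot m k ι - δ) (knot m k ι + δ)) = ENNReal.ofReal (2 * δ) := by
      intro ι
      rw [Real.volume_Icc]
      congr 1
      ring
    calc (∑ ι : Fin 3 ⊕ Bool × Fin 7, volume (Set.Icc (knot m k ι - δ) (knot m k ι + δ)))
        = ∑ _ι : Fin 3 ⊕ Bool × Fin 7, ENNReal.ofReal (2 * δ) :=
          Finset.sum_congr rfl fun ι _ => hone ι
      _ = (17 : ℕ) • ENNReal.ofReal (2 * δ) := by
          rw [Finset.sum_const, Finset.card_univ]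
          congr 1
      _ = ENNReal.ofReal ((17:ℕ) * (2 * δ)) := by
          rw [nsmul_eq_mul, ← ENNReal.ofReal_natCast, ← ENNReal.ofReal_mul (by positivity)]
      _ ≤ ENNReal.ofReal (300 * (2:ℝ) ^ (-j)) := by
          apply ENNReal.ofReal_le_ofReal
          rw [hδdef]
          push_cast
          nlinarith [h2j]
  · -- small j : trivial bound
    have h4 : (1/4:ℝ) ≤ (2:ℝ) ^ (-j) := by
      have h1 : (2:ℝ) ^ (-2:ℤ) ≤ (2:ℝ) ^ (-j) :=
        zpow_le_zpow_right₀ (by norm_num) (by omega)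
      have h2 : (2:ℝ) ^ (-2:ℤ) = 1/4 := by norm_num
      rw [h2] at h1; linarith
    refine le_trans (measure_mono (fun x hx => hx.1)) ?_
    rw [Real.volume_Icc]
    apply ENNReal.ofReal_le_ofReal
    linarith
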